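/- For σ > 0, γ > 0, the second moment (hence the variance, since the mean is zero) of the Dual Voigt(γ, σ²) distribution is ∫_ℝ u² p'(u) du = γ²/σ⁴ + 1/σ² − (γ/σ³) · φ(γ/σ)/(1 − Φ(γ/σ)), where φ and Φ are the standard normal density and cumulative distribution function. -/

import Mathlib

open MeasureTheory ProbabilityTheory Real

/-- The standard normal density. -/
noncomputable def stdNormalPDF (t : ℝ) : ℝ := 1 / Real.sqrt (2 * π) * Real.exp (-t ^ 2 / 2)

/-- The standard normal cumulative distribution function. -/
noncomputable def stdNormalCDF (t : ℝ) : ℝ := ∫ s in Set.Iic t, stdNormalPDF s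

/-- The Dual Voigt(γ, σ²) density. -/
noncomputable def dualVoigtDensity (σ γ : ℝ) (u : ℝ) : ℝ :=
  1 / (2 * (1 - stdNormalCDF (γ / σ))) * (σ / Real.sqrt (2 * π)) *
    Real.exp (-γ ^ 2 / (2 * σ ^ 2)) * Real.exp (-γ * |u| - σ ^ 2 * u ^ 2 / 2)

/-!
Completing the square, `exp (-γ²/(2σ²)) · exp (-γ|u| - σ²u²/2) = exp (-(σ|u| + γ/σ)²/2)`, so the
Dual Voigt density is a multiple of `φ (σ|u| + c)` with `c = γ/σ`. By symmetry and the substitution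
`t = σu + c`, the second moment becomes the truncated normal moment
`∫_c^∞ (t - c)² φ(t) dt = (1 + c²)(1 - Φ(c)) - c φ(c)`, which follows from
`(t - c)² φ(t) = (1 + c²) φ(t) + ((2c - t) φ(t))'`.
-/

open Set Filter Topology

section

variable {E : Type*} [NormedAddCommGroup E] [NormedSpace ℝ E]

theorem integral_Ioi_comp_add_right (g : ℝ → E) (a c : ℝ) :
    ∫ x in Ioi a, g (x + c) = ∫ x in Ioi (a + c), g x := by
  rw [← integral_indicator measurableSet_Ioi, ← integral_indicator measurableSet_Ioi,
    ← integral_add_right_eq_self ((Ioi (a + c)).indicator g) c]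
  congr 1
  ext x
  simp only [indicator, mem_Ioi, add_lt_add_iff_right]

theorem integral_Ioi_comp_mul_add (g : ℝ → E) (a c : ℝ) {b : ℝ} (hb : 0 < b) :
    ∫ x in Ioi a, g (b * x + c) = b⁻¹ • ∫ x in Ioi (b * a + c), g x := by
  rw [integral_comp_mul_left_Ioi (fun y => g (y + c)) a hb, integral_Ioi_comp_add_right]

end

theorem stdNormalPDF_eq_gaussianPDFReal : stdNormalPDF = gaussianPDFReal 0 1 := by
  ext t
  simp [stdNormalPDF, gaussianPDFReal]

theorem stdNormalPDF_pos (t : ℝ) : 0 < stdNormalPDF t := by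
  unfold stdNormalPDF; positivity

theorem hasDerivAt_stdNormalPDF (t : ℝ) : HasDerivAt stdNormalPDF (-t * stdNormalPDF t) t := by
  have h : HasDerivAt (fun t : ℝ => -t ^ 2 / 2) (-t) t :=
    (((hasDerivAt_pow 2 t).neg).div_const 2).congr_deriv (by ring)
  exact (h.exp.const_mul (1 / √(2 * π))).congr_deriv (by rw [stdNormalPDF]; ring)

theorem integrable_stdNormalPDF : Integrable stdNormalPDF := by
  rw [stdNormalPDF_eq_gaussianPDFReal]; exact integrable_gaussianPDFReal 0 1

theorem integrable_pow_mul_stdNormalPDF (n : ℕ) :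
    Integrable fun t => t ^ n * stdNormalPDF t := by
  have h := (integrable_rpow_mul_exp_neg_mul_sq (b := 1 / 2) (by norm_num)
    (s := n) (by linarith [n.cast_nonneg (α := ℝ)])).const_mul (1 / √(2 * π))
  refine h.congr (.of_forall fun t => ?_)
  simp only [stdNormalPDF, rpow_natCast]; ring_nf

theorem tendsto_pow_mul_stdNormalPDF_atTop (n : ℕ) :
    Tendsto (fun t => t ^ n * stdNormalPDF t) atTop (𝓝 0) := by
  have h := (rpow_mul_exp_neg_mul_sq_isLittleO_exp_neg (b := 1 / 2) (by norm_num) n).const_mul_left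
    (1 / √(2 * π))
  have h0 : Tendsto (fun x : ℝ => exp (-(1 / 2) * x)) atTop (𝓝 0) :=
    tendsto_exp_atBot.comp (tendsto_id.const_mul_atTop_of_neg (by norm_num))
  refine (h.trans_tendsto h0).congr fun t => ?_
  simp only [stdNormalPDF, rpow_natCast]; ring_nf

theorem one_sub_stdNormalCDF (c : ℝ) : 1 - stdNormalCDF c = ∫ t in Ioi c, stdNormalPDF t := by
  have htotal : ∫ t, stdNormalPDF t = 1 := by
    rw [stdNormalPDF_eq_gaussianPDFReal]; exact integral_gaussianPDFReal_eq_one 0 one_ne_zero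
  rw [← htotal, ← intervalIntegral.integral_Iic_add_Ioi integrable_stdNormalPDF.integrableOn
    integrable_stdNormalPDF.integrableOn, stdNormalCDF, add_sub_cancel_left]

theorem stdNormalCDF_lt_one (c : ℝ) : stdNormalCDF c < 1 := by
  have h : 0 < ∫ t in Ioi c, stdNormalPDF t := by
    rw [integral_pos_iff_support_of_nonneg (fun t => (stdNormalPDF_pos t).le)
      integrable_stdNormalPDF.integrableOn]
    simp [Function.support, (stdNormalPDF_pos _).ne']
  linarith [one_sub_stdNormalCDF c]

theorem integral_Ioi_sq_sub_mul_stdNormalPDF (c : ℝ) :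
    ∫ t in Ioi c, (t - c) ^ 2 * stdNormalPDF t =
      (1 + c ^ 2) * (1 - stdNormalCDF c) - c * stdNormalPDF c := by
  have hderiv : ∀ t ∈ Ici c, HasDerivAt (fun t => (2 * c - t) * stdNormalPDF t)
      ((t ^ 2 - 2 * c * t - 1) * stdNormalPDF t) t := fun t _ =>
    (((hasDerivAt_id t).const_sub (2 * c)).mul (hasDerivAt_stdNormalPDF t)).congr_deriv
      (by simp only [id]; ring)
  have hint : Integrable fun t => (t ^ 2 - 2 * c * t - 1) * stdNormalPDF t := by
    refine (((integrable_pow_mul_stdNormalPDF 2).sub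
      ((integrable_pow_mul_stdNormalPDF 1).const_mul (2 * c))).sub integrable_stdNormalPDF).congr
      (.of_forall fun t => ?_)
    simp only [Pi.sub_apply]; ring
  have hlim : Tendsto (fun t => (2 * c - t) * stdNormalPDF t) atTop (𝓝 0) := by
    have h := ((tendsto_pow_mul_stdNormalPDF_atTop 0).const_mul (2 * c)).sub
      (tendsto_pow_mul_stdNormalPDF_atTop 1)
    simp only [mul_zero, sub_zero, pow_zero, pow_one, one_mul] at h
    exact h.congr fun t => by ring
  have hFTC := integral_Ioi_of_hasDerivAt_of_tendsto' hderiv hint.integrableOn hlim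
  have hsplit : ∀ t, (t - c) ^ 2 * stdNormalPDF t =
      (1 + c ^ 2) * stdNormalPDF t + (t ^ 2 - 2 * c * t - 1) * stdNormalPDF t := fun t => by ring
  simp_rw [hsplit]
  rw [integral_add (integrable_stdNormalPDF.const_mul _).integrableOn hint.integrableOn,
    integral_const_mul, hFTC, one_sub_stdNormalCDF]
  ring

theorem integral_Ioi_sq_mul_stdNormalPDF_mul_add {σ : ℝ} (hσ : 0 < σ) (c : ℝ) :
    ∫ x in Ioi 0, x ^ 2 * stdNormalPDF (σ * x + c) =
      ((1 + c ^ 2) * (1 - stdNormalCDF c) - c * stdNormalPDF c) / σ ^ 3 := by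
  have h := integral_Ioi_comp_mul_add (fun t => ((t - c) / σ) ^ 2 * stdNormalPDF t) 0 c hσ
  simp only [mul_zero, zero_add, add_sub_cancel_right, mul_div_cancel_left₀ _ hσ.ne',
    smul_eq_mul] at h
  simp_rw [h, div_pow, div_mul_eq_mul_div]
  rw [integral_div, integral_Ioi_sq_sub_mul_stdNormalPDF]
  field_simp

theorem dualVoigtDensity_eq_mul_stdNormalPDF {σ : ℝ} (hσ : σ ≠ 0) (γ u : ℝ) :
    dualVoigtDensity σ γ u =
      σ / (2 * (1 - stdNormalCDF (γ / σ))) * stdNormalPDF (σ * |u| + γ / σ) := by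
  have hexp : exp (-γ ^ 2 / (2 * σ ^ 2)) * exp (-γ * |u| - σ ^ 2 * u ^ 2 / 2) =
      exp (-(σ * |u| + γ / σ) ^ 2 / 2) := by
    rw [← exp_add, ← sq_abs u]; congr 1; field_simp; ring
  simp only [dualVoigtDensity, stdNormalPDF, ← hexp]
  ring

theorem dualVoigt_second_moment_general (σ γ : ℝ) (hσ : 0 < σ) :
    (∫ u : ℝ, u ^ 2 * dualVoigtDensity σ γ u) =
      γ ^ 2 / σ ^ 4 + 1 / σ ^ 2 -
        γ / σ ^ 3 * (stdNormalPDF (γ / σ) / (1 - stdNormalCDF (γ / σ))) := by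
  have hΦ : 1 - stdNormalCDF (γ / σ) ≠ 0 := (sub_pos.2 (stdNormalCDF_lt_one _)).ne'
  have hsymm : ∫ u, u ^ 2 * stdNormalPDF (σ * |u| + γ / σ) =
      2 * ∫ x in Ioi 0, x ^ 2 * stdNormalPDF (σ * x + γ / σ) := by
    rw [← integral_comp_abs (f := fun x => x ^ 2 * stdNormalPDF (σ * x + γ / σ))]
    simp only [sq_abs]
  simp_rw [dualVoigtDensity_eq_mul_stdNormalPDF hσ.ne', mul_left_comm (_ ^ 2)]
  rw [integral_const_mul, hsymm, integral_Ioi_sq_mul_stdNormalPDF_mul_add hσ]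
  field_simp
  ring

/-- the second moment (hence the variance) of the Dual Voigt(γ, σ²)
distribution is γ²/σ⁴ + 1/σ² − (γ/σ³)·φ(γ/σ)/(1 − Φ(γ/σ)). -/
theorem dualVoigt_second_moment (σ γ : ℝ) (hσ : 0 < σ) (hγ : 0 < γ) :
    (∫ u : ℝ, u ^ 2 * dualVoigtDensity σ γ u) =
      γ ^ 2 / σ ^ 4 + 1 / σ ^ 2 -
        γ / σ ^ 3 * (stdNormalPDF (γ / σ) / (1 - stdNormalCDF (γ / σ))) :=
  dualVoigt_second_moment_general σ γ hσ
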